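/- Let α > 0, c₀ = √(tanh(α)/α), and for each p ∈ ℝ let k(p) be the unique solution of ω_α(k) + ω_α(k+p) = −αc₀p, where ω_α(k) = sign(k)·√(αk·tanh(αk)). Then for every integer p with |p| ≥ 2, |k(p)| > |p|. -/
import Mathlib


noncomputable def omegaA (α k : ℝ) : ℝ :=
  Real.sign k * Real.sqrt (α * k * Real.tanh (α * k))

private lemma tanh_mono {x y : ℝ} (h : x ≤ y) : Real.tanh x ≤ Real.tanh y := by
  rw [Real.tanh_eq_sinh_div_cosh, Real.tanh_eq_sinh_div_cosh,
    div_le_div_iff₀ (Real.cosh_pos x) (Real.cosh_pos y)]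
  have hs : Real.sinh (x - y) ≤ 0 := by
    rw [← Real.sinh_zero]
    exact Real.sinh_le_sinh.mpr (by linarith)
  rw [Real.sinh_sub] at hs
  nlinarith [Real.cosh_pos x, Real.cosh_pos y]

private lemma tanh_nonneg' {x : ℝ} (h : 0 ≤ x) : 0 ≤ Real.tanh x := by
  have := tanh_mono h
  rwa [Real.tanh_zero] at this

private lemma tanh_add_lt {x y : ℝ} (hx : 0 < x) (hy : 0 < y) :
    Real.tanh (x + y) < Real.tanh x + Real.tanh y := by
  have hcx := Real.cosh_pos x
  have hcy := Real.cosh_pos y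
  have hsx : 0 < Real.sinh x := Real.sinh_pos_iff.mpr hx
  have hsy : 0 < Real.sinh y := Real.sinh_pos_iff.mpr hy
  have hcxy := Real.cosh_pos (x + y)
  rw [Real.tanh_eq_sinh_div_cosh, Real.tanh_eq_sinh_div_cosh, Real.tanh_eq_sinh_div_cosh,
    Real.sinh_add, Real.cosh_add, div_add_div _ _ (ne_of_gt hcx) (ne_of_gt hcy),
    div_lt_div_iff₀ (by positivity) (by positivity)]
  nlinarith [mul_pos hsx hsy, mul_pos hcx hcy, mul_pos hsx hcy, mul_pos hcx hsy]

private lemma tanh_nat_le {x : ℝ} (hx : 0 < x) : ∀ n : ℕ, 1 ≤ n →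
    Real.tanh (n * x) ≤ n * Real.tanh x := by
  intro n hn
  induction n with
  | zero => omega
  | succ m ih =>
    rcases Nat.eq_or_lt_of_le hn with h1 | h1
    · simp [← h1]
    · have hm : 1 ≤ m := by omega
      have h2 := tanh_add_lt (by positivity : (0:ℝ) < m * x) hx
      have := ih hm
      push_cast
      rw [show ((m:ℝ) + 1) * x = (m:ℝ) * x + x by ring]
      linarith

private lemma tanh_nat_lt {x : ℝ} (hx : 0 < x) {n : ℕ} (hn : 2 ≤ n) :
    Real.tanh (n * x) < n * Real.tanh x := by
  have key : (n : ℝ) * x = (n - 1 : ℕ) * x + x := by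
    have : (((n - 1 : ℕ) : ℝ)) = (n : ℝ) - 1 := by
      push_cast [Nat.cast_sub (by omega : 1 ≤ n)]; ring
    rw [this]; ring
  have hpos : (0:ℝ) < ((n - 1 : ℕ) : ℝ) * x := by
    apply mul_pos _ hx
    exact_mod_cast Nat.sub_pos_of_lt (by omega)
  have h1 := tanh_add_lt hpos hx
  have h2 := tanh_nat_le hx (n - 1) (by omega)
  have hc : (((n - 1 : ℕ) : ℝ)) = (n : ℝ) - 1 := by
    push_cast [Nat.cast_sub (by omega : 1 ≤ n)]; ring
  rw [key]
  rw [hc] at h1 h2 ⊢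
  linarith

private lemma omega_nonneg_eq (α : ℝ) {k : ℝ} (hk : 0 ≤ k) :
    omegaA α k = Real.sqrt (α * k * Real.tanh (α * k)) := by
  rcases eq_or_lt_of_le hk with h | h
  · simp [omegaA, ← h]
  · rw [omegaA, Real.sign_of_pos h, one_mul]

private lemma omega_neg (α k : ℝ) : omegaA α (-k) = -omegaA α k := by
  unfold omegaA
  rw [Real.sign_neg]
  have : α * -k * Real.tanh (α * -k) = α * k * Real.tanh (α * k) := by
    rw [show α * -k = -(α * k) by ring, Real.tanh_neg]; ring
  rw [this]; ring

private lemma omega_mono_nonneg (α : ℝ) (hα : 0 < α) {a b : ℝ} (ha : 0 ≤ a) (hab : a ≤ b) :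
    omegaA α a ≤ omegaA α b := by
  rw [omega_nonneg_eq α ha, omega_nonneg_eq α (ha.trans hab)]
  apply Real.sqrt_le_sqrt
  have hta : 0 ≤ Real.tanh (α * a) := tanh_nonneg' (by positivity)
  have htb : Real.tanh (α * a) ≤ Real.tanh (α * b) := tanh_mono (by nlinarith)
  have hab' : α * a ≤ α * b := by nlinarith
  exact mul_le_mul hab' htb hta (by nlinarith)

private lemma omega_mono (α : ℝ) (hα : 0 < α) {a b : ℝ} (hab : a ≤ b) :
    omegaA α a ≤ omegaA α b := by
  rcases le_or_gt 0 a with ha | ha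
  · exact omega_mono_nonneg α hα ha hab
  · rcases le_or_gt 0 b with hb | hb
    · have h1 : omegaA α a = -omegaA α (-a) := by rw [omega_neg, neg_neg]
      have h2 : 0 ≤ omegaA α (-a) := by
        rw [omega_nonneg_eq α (by linarith)]; positivity
      have h3 : 0 ≤ omegaA α b := by
        rw [omega_nonneg_eq α hb]; positivity
      linarith
    · have h1 : omegaA α a = -omegaA α (-a) := by rw [omega_neg, neg_neg]
      have h2 : omegaA α b = -omegaA α (-b) := by rw [omega_neg, neg_neg]
      have := omega_mono_nonneg α hα (by linarith : (0:ℝ) ≤ -b) (by linarith : -b ≤ -a)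
      linarith

private lemma c_eq (α : ℝ) (hα : 0 < α) :
    α * Real.sqrt (Real.tanh α / α) = Real.sqrt (α * Real.tanh α) := by
  rw [Real.sqrt_div (tanh_nonneg' hα.le), Real.sqrt_mul hα.le]
  have h1 : Real.sqrt α * Real.sqrt α = α := Real.mul_self_sqrt hα.le
  have h2 : Real.sqrt α ≠ 0 := by positivity
  field_simp
  nlinarith [Real.sqrt_nonneg (Real.tanh α)]

private lemma omega_nat_lt (α : ℝ) (hα : 0 < α) {n : ℕ} (hn : 2 ≤ n) :
    omegaA α n < n * Real.sqrt (α * Real.tanh α) := by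
  rw [omega_nonneg_eq α (by positivity)]
  have key : α * n * Real.tanh (α * n) < (n:ℝ)^2 * (α * Real.tanh α) := by
    have h := tanh_nat_lt hα hn
    have hn0 : (0:ℝ) < n := by positivity
    rw [show α * (n:ℝ) = (n:ℝ) * α by ring]
    nlinarith [mul_lt_mul_of_pos_left h (mul_pos hn0 hα)]
  calc Real.sqrt (α * n * Real.tanh (α * n)) < Real.sqrt ((n:ℝ)^2 * (α * Real.tanh α)) := by
        apply Real.sqrt_lt_sqrt _ key
        have : 0 ≤ Real.tanh (α * n) := tanh_nonneg' (by positivity)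
        positivity
    _ = n * Real.sqrt (α * Real.tanh α) := by
        rw [Real.sqrt_mul (sq_nonneg _), Real.sqrt_sq (by positivity)]

theorem collision_root_abs_gt (α : ℝ) (hα : 0 < α) (K : ℝ → ℝ)
    (hK : ∀ p : ℝ, omegaA α (K p) + omegaA α (K p + p) =
      -(α * Real.sqrt (Real.tanh α / α) * p)) :
    ∀ p : ℤ, 2 ≤ |p| → |(p : ℝ)| < |K (p : ℝ)| := by
  intro p hp
  set c := Real.sqrt (α * Real.tanh α) with hc
  have hE := hK (p : ℝ)
  rw [c_eq α hα] at hE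
  set n := p.natAbs with hn
  have hn2 : 2 ≤ n := by rw [hn]; rw [Int.abs_eq_natAbs] at hp; omega
  have hω := omega_nat_lt α hα hn2
  rw [← hc] at hω
  have hcast : |(p : ℝ)| = (n : ℝ) := by
    rw [hn]; push_cast [Nat.cast_natAbs]; simp
  set k := K (p : ℝ) with hk
  rcases abs_cases p with ⟨h1, hpos⟩ | ⟨h1, hneg⟩
  · -- p ≥ 2, (p:ℝ) = n
    have hpn : (p : ℝ) = (n : ℝ) := by
      rw [← hcast, abs_of_nonneg]; exact_mod_cast hpos
    rw [hcast]
    by_contra hcon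
    push_neg at hcon
    -- |k| ≤ n, in particular k ≥ -n
    have hk1 : -(n : ℝ) ≤ k := by
      have := abs_le.mp hcon
      linarith [this.1]
    have h2 : omegaA α (-(n:ℝ)) ≤ omegaA α k := omega_mono α hα hk1
    rw [omega_neg] at h2
    rw [hpn] at hE
    have h3 : omegaA α 0 ≤ omegaA α (k + (n:ℝ)) := by
      apply omega_mono α hα; linarith
    have h0 : omegaA α 0 = 0 := by simp [omegaA]
    rw [h0] at h3
    -- hE : ω k + ω (k + n) = -(c * n)
    have : -(c * n) ≥ -omegaA α (n:ℝ) := by linarith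
    have : omegaA α (n:ℝ) ≥ c * n := by linarith
    linarith [hω]
  · -- p ≤ -2, (p:ℝ) = -n
    have hpn : (p : ℝ) = -(n : ℝ) := by
      rw [← hcast, abs_of_nonpos]
      · ring
      · exact_mod_cast (by omega : p ≤ 0)
    rw [hcast]
    by_contra hcon
    push_neg at hcon
    have hk1 : k ≤ (n : ℝ) := by
      have := abs_le.mp hcon
      linarith [this.2]
    have h2 : omegaA α k ≤ omegaA α (n:ℝ) := omega_mono α hα hk1
    rw [hpn] at hE
    have h3 : omegaA α (k + -(n:ℝ)) ≤ omegaA α 0 := by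
      apply omega_mono α hα; linarith
    have h0 : omegaA α 0 = 0 := by simp [omegaA]
    rw [h0] at h3
    -- hE : ω k + ω (k - n) = -(c * -n) = c * n
    have : c * (n:ℝ) ≤ omegaA α (n:ℝ) := by linarith [hE]
    linarith [hω]
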